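/- Let Γ be a distance-regular graph with diameter D ≥ 2t + 2 for some positive integer t. Then the second largest eigenvalue θ₁ of Γ satisfies θ₁ > a_t + c_t. Formally: there is an eigenvalue θ of the adjacency matrix of Γ with θ < k and θ > a_t + c_t. -/

import Mathlib

open SimpleGraph

/-- `IsDRG G D b c` : `G` is a distance-regular graph with diameter `D` and
intersection numbers `b i`, `c i`.  The valency is `k = b 0`. -/
structure IsDRG {V : Type*} [Fintype V] (G : SimpleGraph V) (D : ℕ) (b c : ℕ → ℕ) : Prop where
  connected : G.Connected
  one_le_diam : 1 ≤ D
  dist_le : ∀ x y : V, G.dist x y ≤ D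
  exists_dist_eq : ∃ x y : V, G.dist x y = D
  c_zero : c 0 = 0
  b_diam : b D = 0
  c_one : c 1 = 1
  count_c : ∀ i ≤ D, ∀ x y : V, G.dist x y = i →
      {z : V | G.Adj y z ∧ G.dist x z = i - 1}.ncard = c i
  count_b : ∀ i ≤ D, ∀ x y : V, G.dist x y = i →
      {z : V | G.Adj y z ∧ G.dist x z = i + 1}.ncard = b i

/-- `θ` is an eigenvalue of the adjacency matrix of `G`. -/
def IsAdjEigenvalue {V : Type*} [Fintype V] (G : SimpleGraph V) [DecidableRel G.Adj]
    (θ : ℝ) : Prop :=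
  ∃ v : V → ℝ, v ≠ 0 ∧ (G.adjMatrix ℝ).mulVec v = θ • v

/-- The `(t+1) × (t+1)` tridiagonal matrix `L_Γ(t)` with subdiagonal `c i`,
diagonal `a i = b 0 - b i - c i` (so `a 0 = 0`) and superdiagonal `b i`. -/
def Lmat (b c : ℕ → ℕ) (t : ℕ) : Matrix (Fin (t + 1)) (Fin (t + 1)) ℝ :=
  fun i j =>
    if (i : ℕ) = (j : ℕ) + 1 then (c (i : ℕ) : ℝ)
    else if (i : ℕ) = (j : ℕ) then (b 0 : ℝ) - (b (i : ℕ) : ℝ) - (c (i : ℕ) : ℝ)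
    else if (j : ℕ) = (i : ℕ) + 1 then (b (i : ℕ) : ℝ)
    else 0

/-- `θ` is an eigenvalue of the real matrix `M`. -/
def IsMatEigenvalue {n : Type*} [Fintype n] (M : Matrix n n ℝ) (θ : ℝ) : Prop :=
  ∃ v : n → ℝ, v ≠ 0 ∧ M.mulVec v = θ • v

/-- A Terwilliger graph: connected, non-complete, and for any two vertices at
distance two the set of their common neighbours is a clique. -/
def IsTerwilliger {V : Type*} (G : SimpleGraph V) : Prop :=
  G.Connected ∧ (∃ u v : V, u ≠ v ∧ ¬ G.Adj u v) ∧
    ∀ u v : V, G.dist u v = 2 → G.IsClique (G.commonNeighbors u v)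

/-!
Take vertices `x, y` at distance `D ≥ 2t + 2`. The balls `B(x, t)` and `B(y, t)` are disjoint
and no edge joins them. Inside a ball only the vertices at distance exactly `t` from the centre
have neighbours outside it, `b_t` of them, and the centre has none while `b_t > 0`; so the ball
carries more than `(k - b_t) |B|` ordered edges. Hence the vector
`|B(y,t)| 𝟙_{B(x,t)} - |B(x,t)| 𝟙_{B(y,t)}`, orthogonal to the constants, has Rayleigh quotient
`> k - b_t = a_t + c_t`. Expanding it in an orthonormal eigenbasis of the adjacency matrix
yields an eigenvector with eigenvalue `> k - b_t` that is not orthogonal to it; as the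
eigenvectors of a connected `k`-regular graph with eigenvalue `≥ k` are constant, that eigenvalue
is `< k`.
-/

open Finset Matrix

lemma OrthonormalBasis.dotProduct_eq_sum {n : Type*} [Fintype n]
    (W : OrthonormalBasis n ℝ (EuclideanSpace ℝ n)) (u v : n → ℝ) :
    u ⬝ᵥ v = ∑ i, (⇑(W i) ⬝ᵥ u) * (⇑(W i) ⬝ᵥ v) := by
  have := W.sum_inner_mul_inner (WithLp.toLp 2 u) (WithLp.toLp 2 v)
  simp only [EuclideanSpace.inner_eq_star_dotProduct, star_trivial] at this
  simpa [dotProduct_comm] using this.symm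

lemma indicator_one_dotProduct {n : Type*} [Fintype n] (S : Finset n) (v : n → ℝ) :
    (S : Set n).indicator 1 ⬝ᵥ v = ∑ i ∈ S, v i := by
  classical
  simp [dotProduct, Set.indicator_apply, sum_ite_mem]

namespace Matrix

variable {n : Type*} [Fintype n]

lemma exists_sum_eq_zero_mul_dotProduct_lt {A : Matrix n n ℝ} (hA : A.IsSymm) {v w : n → ℝ}
    {r : ℝ} (hvw : v ⬝ᵥ w = 0) (hAvw : v ⬝ᵥ (A *ᵥ w) = 0) (hv : 0 < ∑ i, v i)
    (hw : 0 < ∑ i, w i) (hrv : r * (v ⬝ᵥ v) < v ⬝ᵥ (A *ᵥ v))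
    (hrw : r * (w ⬝ᵥ w) < w ⬝ᵥ (A *ᵥ w)) :
    ∃ u : n → ℝ, ∑ i, u i = 0 ∧ r * (u ⬝ᵥ u) < u ⬝ᵥ (A *ᵥ u) := by
  set α := ∑ i, w i
  set β := ∑ i, v i
  have hAwv : w ⬝ᵥ (A *ᵥ v) = 0 := by
    rw [dotProduct_mulVec, ← mulVec_transpose, hA.eq, dotProduct_comm, hAvw]
  refine ⟨α • v - β • w, ?_, ?_⟩
  · simp only [Pi.sub_apply, Pi.smul_apply, smul_eq_mul, sum_sub_distrib, ← mul_sum]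
    ring
  · have hα : 0 < α ^ 2 := by positivity
    have hβ : 0 < β ^ 2 := by positivity
    simp only [mulVec_sub, mulVec_smul, dotProduct_sub, sub_dotProduct, dotProduct_smul,
      smul_dotProduct, smul_eq_mul, hvw, hAvw, hAwv, dotProduct_comm w v]
    nlinarith [mul_lt_mul_of_pos_left hrv hα, mul_lt_mul_of_pos_left hrw hβ]

namespace IsHermitian

variable [DecidableEq n] {A : Matrix n n ℝ} (hA : A.IsHermitian)

lemma eigenvectorBasis_dotProduct_mulVec (u : n → ℝ) (i : n) :
    ⇑(hA.eigenvectorBasis i) ⬝ᵥ (A *ᵥ u) =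
      hA.eigenvalues i * (⇑(hA.eigenvectorBasis i) ⬝ᵥ u) := by
  rw [dotProduct_mulVec, ← mulVec_transpose, ← conjTranspose_eq_transpose_of_trivial, hA.eq,
    hA.mulVec_eigenvectorBasis, smul_dotProduct, smul_eq_mul]

lemma dotProduct_mulVec_self_eq_sum (u : n → ℝ) :
    u ⬝ᵥ (A *ᵥ u) = ∑ i, hA.eigenvalues i * (⇑(hA.eigenvectorBasis i) ⬝ᵥ u) ^ 2 := by
  simp only [hA.eigenvectorBasis.dotProduct_eq_sum u, eigenvectorBasis_dotProduct_mulVec]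
  exact sum_congr rfl fun i _ => by ring

lemma exists_eigenvalue_gt_of_mul_dotProduct_lt {u : n → ℝ} {r : ℝ}
    (h : r * (u ⬝ᵥ u) < u ⬝ᵥ (A *ᵥ u)) :
    ∃ i, r < hA.eigenvalues i ∧ ⇑(hA.eigenvectorBasis i) ⬝ᵥ u ≠ 0 := by
  by_contra! hle
  refine h.not_ge ?_
  rw [hA.dotProduct_mulVec_self_eq_sum, hA.eigenvectorBasis.dotProduct_eq_sum u u, mul_sum]
  refine sum_le_sum fun i _ => ?_
  rcases le_or_gt (hA.eigenvalues i) r with hμ | hμ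
  · rw [← sq]
    exact mul_le_mul_of_nonneg_right hμ (sq_nonneg _)
  · simp [hle i hμ]

end IsHermitian

end Matrix

namespace SimpleGraph

variable {V : Type*} {G : SimpleGraph V}

lemma Walk.dist_getVert_of_length_eq_dist {u v : V} {p : G.Walk u v}
    (hp : p.length = G.dist u v) {i : ℕ} (hi : i ≤ p.length) : G.dist u (p.getVert i) = i := by
  rw [← length_eq_dist_of_subwalk hp (p.isSubwalk_take i), Walk.take_length]
  omega

lemma Connected.not_adj_of_dist_le {x y z w : V} {t : ℕ} (hc : G.Connected)
    (hxy : 2 * t + 1 < G.dist x y) (hz : G.dist x z ≤ t) (hw : G.dist y w ≤ t) :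
    z ≠ w ∧ ¬G.Adj z w := by
  have hxz := hc.dist_triangle (u := x) (v := z) (w := y)
  have hzw := hc.dist_triangle (u := z) (v := w) (w := y)
  rw [dist_comm (u := w)] at hzw
  refine ⟨?_, fun hadj => ?_⟩
  · rintro rfl
    rw [dist_self] at hzw
    omega
  · rw [dist_eq_one_iff_adj.2 hadj] at hzw
    omega

variable [Fintype V]

noncomputable def distBall (G : SimpleGraph V) (x : V) (t : ℕ) : Finset V := {w | G.dist x w ≤ t}

@[simp]
lemma mem_distBall {x w : V} {t : ℕ} : w ∈ G.distBall x t ↔ G.dist x w ≤ t := by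
  simp [distBall]

variable [DecidableRel G.Adj]

lemma neighborFinset_subset_distBall {x z : V} {t : ℕ} (hz : G.dist x z < t) :
    G.neighborFinset z ⊆ G.distBall x t := fun w hw => by
  have hzw := (mem_neighborFinset G z w).1 hw
  have := hzw.reachable.dist_triangle_right x
  rw [dist_eq_one_iff_adj.2 hzw] at this
  rw [mem_distBall]
  omega

lemma IsRegularOfDegree.lapMatrix_mulVec [DecidableEq V] {k : ℕ} (hG : G.IsRegularOfDegree k)
    (v : V → ℝ) : G.lapMatrix ℝ *ᵥ v = (k : ℝ) • v - G.adjMatrix ℝ *ᵥ v := by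
  ext z
  simp [lapMatrix_mulVec_apply, adjMatrix_mulVec_apply, hG z]

-- `k - A` is the Laplacian, which is positive semidefinite with the constants as its kernel.
lemma Connected.apply_eq_of_mulVec_eq_smul [DecidableEq V] {k : ℕ} (hc : G.Connected)
    (hG : G.IsRegularOfDegree k) {v : V → ℝ} {μ : ℝ} (hv : G.adjMatrix ℝ *ᵥ v = μ • v)
    (hkμ : (k : ℝ) ≤ μ) (x y : V) : v x = v y := by
  have hL : G.lapMatrix ℝ *ᵥ v = ((k : ℝ) - μ) • v := by
    rw [hG.lapMatrix_mulVec, hv, sub_smul]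
  have hnonneg : 0 ≤ v ⬝ᵥ (G.lapMatrix ℝ *ᵥ v) := by
    simpa using (posSemidef_lapMatrix ℝ G).dotProduct_mulVec_nonneg v
  have hzero : toLinearMap₂' ℝ (G.lapMatrix ℝ) v v = 0 := by
    rw [toLinearMap₂'_apply']
    refine le_antisymm ?_ hnonneg
    rw [hL, dotProduct_smul, smul_eq_mul]
    exact mul_nonpos_of_nonpos_of_nonneg (by linarith) (dotProduct_self_star_nonneg v)
  exact (lapMatrix_toLinearMap₂'_apply'_eq_zero_iff_forall_reachable G v).1 hzero x y
    (hc.preconnected x y)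

lemma Connected.exists_adjEigenvalue_of_sum_eq_zero {k : ℕ} (hc : G.Connected)
    (hG : G.IsRegularOfDegree k) {u : V → ℝ} {r : ℝ} (hu : ∑ z, u z = 0)
    (hr : r * (u ⬝ᵥ u) < u ⬝ᵥ (G.adjMatrix ℝ *ᵥ u)) :
    ∃ θ, IsAdjEigenvalue G θ ∧ θ < k ∧ r < θ := by
  classical
  have hA := G.isHermitian_adjMatrix ℝ
  obtain ⟨i, hri, hWu⟩ := hA.exists_eigenvalue_gt_of_mul_dotProduct_lt hr
  refine ⟨hA.eigenvalues i, ⟨_, ?_, hA.mulVec_eigenvectorBasis i⟩, ?_, hri⟩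
  · exact (WithLp.ofLp_eq_zero (p := 2)).not.2 (hA.eigenvectorBasis.orthonormal.ne_zero i)
  · by_contra! hkμ
    obtain ⟨z⟩ := hc.nonempty
    have hconst := hc.apply_eq_of_mulVec_eq_smul hG (hA.mulVec_eigenvectorBasis i) hkμ z
    refine hWu ?_
    simp only [dotProduct, ← hconst, ← mul_sum, hu, mul_zero]

lemma adjMatrix_mulVec_indicator_apply [DecidableEq V] (T : Finset V) (z : V) :
    (G.adjMatrix ℝ *ᵥ (T : Set V).indicator 1) z = #(G.neighborFinset z ∩ T) := by
  simp [adjMatrix_mulVec_apply, Set.indicator_apply, sum_ite_mem]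

lemma indicator_dotProduct_adjMatrix_mulVec_indicator [DecidableEq V] (S T : Finset V) :
    (S : Set V).indicator 1 ⬝ᵥ (G.adjMatrix ℝ *ᵥ (T : Set V).indicator 1) =
      ∑ z ∈ S, (#(G.neighborFinset z ∩ T) : ℝ) := by
  simp only [indicator_one_dotProduct, adjMatrix_mulVec_indicator_apply]

lemma exists_sum_eq_zero_mul_dotProduct_lt_of_not_adj [DecidableEq V] {S T : Finset V}
    (hS : S.Nonempty) (hT : T.Nonempty) (hST : ∀ z ∈ S, ∀ w ∈ T, z ≠ w ∧ ¬G.Adj z w) {r : ℝ}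
    (hrS : r * #S < ∑ z ∈ S, (#(G.neighborFinset z ∩ S) : ℝ))
    (hrT : r * #T < ∑ z ∈ T, (#(G.neighborFinset z ∩ T) : ℝ)) :
    ∃ u : V → ℝ, ∑ z, u z = 0 ∧ r * (u ⬝ᵥ u) < u ⬝ᵥ (G.adjMatrix ℝ *ᵥ u) := by
  have hdisj : S ∩ T = ∅ := eq_empty_of_forall_notMem fun z hz =>
    (hST z (mem_inter.1 hz).1 z (mem_inter.1 hz).2).1 rfl
  have hnoedge : ∀ z ∈ S, G.neighborFinset z ∩ T = ∅ := fun z hz => by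
    ext w
    simpa using fun hzw hw => (hST z hz w hw).2 hzw
  have hsum : ∀ U : Finset V, U.Nonempty → 0 < ∑ z, (U : Set V).indicator (1 : V → ℝ) z :=
    fun U hU => by simpa [Set.indicator_apply] using hU
  refine Matrix.exists_sum_eq_zero_mul_dotProduct_lt (isSymm_adjMatrix G)
    (v := (S : Set V).indicator 1) (w := (T : Set V).indicator 1) ?_ ?_ (hsum S hS) (hsum T hT)
    ?_ ?_
  · simp [indicator_one_dotProduct, Set.indicator_apply, sum_ite_mem, hdisj]
  · rw [indicator_dotProduct_adjMatrix_mulVec_indicator]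
    exact sum_eq_zero fun z hz => by simp [hnoedge z hz]
  · simpa [indicator_dotProduct_adjMatrix_mulVec_indicator, indicator_one_dotProduct,
      Set.indicator_apply] using hrS
  · simpa [indicator_dotProduct_adjMatrix_mulVec_indicator, indicator_one_dotProduct,
      Set.indicator_apply] using hrT

end SimpleGraph

namespace IsDRG

open SimpleGraph

variable {V : Type*} [Fintype V] {G : SimpleGraph V} {D : ℕ} {b c : ℕ → ℕ}

lemma isRegularOfDegree [DecidableRel G.Adj] (h : IsDRG G D b c) :
    G.IsRegularOfDegree (b 0) := by
  intro z
  have h0 := h.count_b 0 (Nat.zero_le D) z z dist_self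
  simp only [zero_add, dist_eq_one_iff_adj, and_self] at h0
  rw [← h0, ← card_neighborFinset_eq_degree, ← Set.ncard_coe_finset, coe_neighborFinset]
  rfl

lemma b_pos (h : IsDRG G D b c) {i : ℕ} (hi : i < D) : 0 < b i := by
  obtain ⟨x, y, hxy⟩ := h.exists_dist_eq
  obtain ⟨p, hp⟩ := h.connected.exists_walk_length_eq_dist x y
  have hpD : p.length = D := hp.trans hxy
  rw [← h.count_b i hi.le x (p.getVert i) (p.dist_getVert_of_length_eq_dist hp (by omega))]
  exact (Set.ncard_pos (Set.toFinite _)).2 ⟨p.getVert (i + 1), p.adj_getVert_succ (by omega),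
    p.dist_getVert_of_length_eq_dist hp (by omega)⟩

variable [DecidableRel G.Adj] [DecidableEq V]

lemma card_neighborFinset_sdiff_distBall (h : IsDRG G D b c) {x z : V} {t : ℕ} (ht : t ≤ D)
    (hz : G.dist x z = t) : #(G.neighborFinset z \ G.distBall x t) = b t := by
  rw [← h.count_b t ht x z hz, ← Set.ncard_coe_finset]
  congr 1
  ext w
  simp only [coe_sdiff, Set.mem_sdiff, mem_coe, mem_neighborFinset, mem_distBall,
    Set.mem_ofPred_eq]
  refine and_congr_right fun hzw => ?_
  have := hzw.reachable.dist_triangle_right x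
  rw [dist_eq_one_iff_adj.2 hzw] at this
  omega

lemma card_neighborFinset_sdiff_distBall_le (h : IsDRG G D b c) {x z : V} {t : ℕ} (ht : t ≤ D)
    (hz : z ∈ G.distBall x t) : #(G.neighborFinset z \ G.distBall x t) ≤ b t := by
  rcases (mem_distBall.1 hz).eq_or_lt with heq | hlt
  · exact (h.card_neighborFinset_sdiff_distBall ht heq).le
  · rw [sdiff_eq_empty_iff_subset.2 (neighborFinset_subset_distBall hlt), card_empty]
    exact Nat.zero_le _

lemma sum_card_inter_distBall_gt (h : IsDRG G D b c) (x : V) {t : ℕ} (ht : 0 < t)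
    (htD : t < D) :
    ((b 0 : ℝ) - b t) * #(G.distBall x t) <
      ∑ z ∈ G.distBall x t, (#(G.neighborFinset z ∩ G.distBall x t) : ℝ) := by
  set B := G.distBall x t
  have hx : #(G.neighborFinset x \ B) < b t := by
    rw [sdiff_eq_empty_iff_subset.2 (neighborFinset_subset_distBall (by rw [dist_self]; omega)),
      card_empty]
    exact h.b_pos htD
  have hout : ∑ z ∈ B, #(G.neighborFinset z \ B) < #B * b t := by
    simpa using sum_lt_sum (fun z hz => h.card_neighborFinset_sdiff_distBall_le htD.le hz)
      ⟨x, by simp, hx⟩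
  have hdeg : ∑ z ∈ B, #(G.neighborFinset z ∩ B) + ∑ z ∈ B, #(G.neighborFinset z \ B) =
      #B * b 0 := by
    simp [← sum_add_distrib, card_inter_add_card_sdiff, h.isRegularOfDegree _]
  rw [← Nat.cast_sum]
  have hout' : ((∑ z ∈ B, #(G.neighborFinset z \ B) : ℕ) : ℝ) < #B * b t := by
    exact_mod_cast hout
  have hdeg' : ((∑ z ∈ B, #(G.neighborFinset z ∩ B) : ℕ) : ℝ) +
      (∑ z ∈ B, #(G.neighborFinset z \ B) : ℕ) = #B * b 0 := by
    exact_mod_cast hdeg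
  linarith

end IsDRG

/-- If `Γ` is distance-regular with diameter `D ≥ 2t + 2`, then the second largest
eigenvalue `θ₁` of `Γ` satisfies `θ₁ > a_t + c_t`: there is an adjacency eigenvalue
`θ < k` with `θ > a_t + c_t`, where `a_t = k - b_t - c_t`. -/
theorem second_largest_eigenvalue_gt_a_t_add_c_t {V : Type} [Fintype V]
    (G : SimpleGraph V) [DecidableRel G.Adj] (D : ℕ) (b c : ℕ → ℕ) (h : IsDRG G D b c)
    (t : ℕ) (ht : 1 ≤ t) (hD : 2 * t + 2 ≤ D) :
    ∃ θ : ℝ, IsAdjEigenvalue G θ ∧ θ < (b 0 : ℝ) ∧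
      ((b 0 : ℝ) - (b t : ℝ) - (c t : ℝ)) + (c t : ℝ) < θ := by
  classical
  obtain ⟨x, y, hxy⟩ := h.exists_dist_eq
  obtain ⟨u, hu0, hu⟩ := G.exists_sum_eq_zero_mul_dotProduct_lt_of_not_adj
    ⟨x, by simp⟩ ⟨y, by simp⟩
    (fun z hz w hw => h.connected.not_adj_of_dist_le (by omega) (mem_distBall.1 hz)
      (mem_distBall.1 hw))
    (h.sum_card_inter_distBall_gt x ht (by omega)) (h.sum_card_inter_distBall_gt y ht (by omega))
  obtain ⟨θ, hθ, hθk, hθ_gt⟩ :=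
    h.connected.exists_adjEigenvalue_of_sum_eq_zero h.isRegularOfDegree hu0 hu
  exact ⟨θ, hθ, hθk, by linarith⟩
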